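/- Every impartial game G is either even or odd, but not both. -/

import Mathlib

/-!
Two games `G`, `H` are linked (`G + T` and `H + T` are both `P`-positions for some `T`) as soon
as no option of `G` equals `H` and no option of `H` equals `G`: take for `T` one game `t` per
option `x` of `G` with `x + t` in `P` but `H + t` not, and symmetrically for the options of `H`.
Such a `t` exists for `x ≠ H`: if `x + Z` is in `N` and `H + Z` in `P`, adjoin to `Z` the mates
`y⁻` of the options `y` of `x`, using that `y + y⁻` is always in `P`. But `G` and `G + *` are
never linked, since `G + T` is an option of `G + * + T` up to equality. For canonical forms
`A = G` and `B = G + *`, therefore, an option of `B` equals `A` (`G` is even) or an option of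
`A` equals `B` (`G` is odd). If both held, with canonical `K ∈ L` and `K' ∈ L'`, the same
dichotomy for `K` and `K' = K + *` would give `L` or `L'` a reversible option.
-/

inductive IGame : Type where
  | mk : List IGame → IGame

namespace IGame

/-- The options of a game. -/
def opts : IGame → List IGame
  | mk l => l

theorem sizeOf_lt_of_mem {x : IGame} {l : List IGame} (h : x ∈ l) :
    sizeOf x < sizeOf (mk l) := by
  have := List.sizeOf_lt_of_mem h
  simp only [mk.sizeOf_spec]
  omega

/-- `x` is an option of `G`. -/
def IsOption (x G : IGame) : Prop := x ∈ G.opts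

/-- The empty game `0`. -/
def zero : IGame := mk []

/-- The game `* = {0}`. -/
def star : IGame := mk [zero]

/-- The game `*2 = {0, *}`. -/
def star2 : IGame := mk [zero, star]

/-- The game `*3 = {0, *, *2}`. -/
def star3 : IGame := mk [zero, star, star2]

/-- Disjunctive sum of games. -/
def add : IGame → IGame → IGame
  | mk l, mk r =>
    mk ((l.attach.map fun x => add x.1 (mk r)) ++
        (r.attach.map fun y => add (mk l) y.1))
termination_by G H => (sizeOf G, sizeOf H)
decreasing_by
  · exact Prod.Lex.left _ _ (sizeOf_lt_of_mem x.2)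
  · exact Prod.Lex.right _ (sizeOf_lt_of_mem y.2)

/-- `MisereP G` holds iff the misère outcome of `G` is `P`
(i.e. `G` has at least one option and no option is a `P`-position). -/
def MisereP : IGame → Prop
  | mk l => l ≠ [] ∧ ∀ x ∈ l, ¬ MisereP x
termination_by G => sizeOf G
decreasing_by exact sizeOf_lt_of_mem (by assumption)

/-- Misère equality of games. -/
def MEquiv (G H : IGame) : Prop :=
  ∀ X : IGame, MisereP (add G X) ↔ MisereP (add H X)

theorem mequiv_refl (G : IGame) : MEquiv G G := fun _ => Iff.rfl
theorem mequiv_symm {G H : IGame} (h : MEquiv G H) : MEquiv H G := fun X => (h X).symm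
theorem mequiv_trans {G H K : IGame} (h₁ : MEquiv G H) (h₂ : MEquiv H K) :
    MEquiv G K := fun X => (h₁ X).trans (h₂ X)

/-- `G` is linked to `H` if `G + T` and `H + T` are both misère `P`-positions for some `T`. -/
def Linked (G H : IGame) : Prop :=
  ∃ T : IGame, MisereP (add G T) ∧ MisereP (add H T)

/-- `H` is a part of `G` if `G = H + X` (misère-equal) for some `X`. -/
def IsPart (H G : IGame) : Prop :=
  ∃ X : IGame, MEquiv G (add H X)

/-- `G` has a reversible option: some option `G'` of `G` has an option `G''` misère-equal
to `G`. -/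
def HasReversibleOption (G : IGame) : Prop :=
  ∃ G' ∈ G.opts, ∃ G'' ∈ G'.opts, MEquiv G'' G

/-- `G` is in simplest (canonical) form: neither `G` nor any of its hereditary
subpositions has a reversible option. -/
def Canonical (G : IGame) : Prop :=
  ∀ H : IGame, Relation.ReflTransGen IsOption H G → ¬ HasReversibleOption H

/-- `G` is even if the simplest form of `G` occurs as an option of the simplest form of
`G + *`. -/
def EvenG (G : IGame) : Prop :=
  ∃ K L : IGame, Canonical K ∧ MEquiv K G ∧ Canonical L ∧ MEquiv L (add G star) ∧
    IsOption K L

/-- `G` is odd if `G + *` is even. -/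
def OddG (G : IGame) : Prop := EvenG (add G star)

/-- A unit is a game with an additive inverse (up to misère equality). -/
def IsUnitG (U : IGame) : Prop :=
  ∃ V : IGame, MEquiv (add U V) zero

/-- `G` and `H` are associates if they differ by a unit. -/
def Assoc (G H : IGame) : Prop :=
  ∃ U : IGame, IsUnitG U ∧ MEquiv G (add H U)

/-- `G` is prime if `G` is not a unit and every part of `G` is associated to `0` or
to `G`. -/
def PrimeG (G : IGame) : Prop :=
  ¬ IsUnitG G ∧ ∀ H : IGame, IsPart H G → Assoc H zero ∨ Assoc H G

/-- The sum `n · G` of `n` copies of `G`. -/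
def nsmul : ℕ → IGame → IGame
  | 0, _ => zero
  | n + 1, G => add G (nsmul n G)

/-- The sum of a list of games. -/
def listSum (L : List IGame) : IGame := L.foldr add zero

/-- The mate `G⁻` of `G`. -/
def mate : IGame → IGame
  | mk [] => star
  | mk (x :: l) => mk ((x :: l).attach.map fun y => mate y.1)
termination_by G => sizeOf G
decreasing_by exact sizeOf_lt_of_mem y.2

/-- The formal birthday of a game. -/
def fbd : IGame → ℕ
  | mk l => (l.attach.map fun x => fbd x.1 + 1).foldr max 0
termination_by G => sizeOf G
decreasing_by exact sizeOf_lt_of_mem x.2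

/-- The birthday of a game: the least formal birthday among all misère-equal games. -/
noncomputable def birthday (G : IGame) : ℕ :=
  sInf (fbd '' {H : IGame | MEquiv G H})

instance setoid : Setoid IGame :=
  ⟨MEquiv, fun _ => mequiv_refl _, mequiv_symm, mequiv_trans⟩

/-- The monoid of misère impartial game values: games modulo misère equality. -/
def MGame := Quotient setoid

theorem sizeOf_lt_of_mem_opts {x G : IGame} (h : x ∈ G.opts) : sizeOf x < sizeOf G := by
  cases G with | mk l => exact sizeOf_lt_of_mem h

theorem opts_mk (l : List IGame) : (mk l).opts = l := rfl

theorem opts_add (G H : IGame) :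
    (add G H).opts = G.opts.map (add · H) ++ H.opts.map (add G ·) := by
  cases G with | mk l =>
  cases H with | mk r =>
  rw [add]
  simp only [opts_mk, List.map_attach_eq_pmap, List.pmap_eq_map]

theorem mem_opts_add {w G H : IGame} :
    w ∈ (add G H).opts ↔ (∃ a ∈ G.opts, add a H = w) ∨ ∃ b ∈ H.opts, add G b = w := by
  simp only [opts_add, List.mem_append, List.mem_map]

theorem add_mem_opts_add_left {a G : IGame} (H : IGame) (ha : a ∈ G.opts) :
    add a H ∈ (add G H).opts :=
  mem_opts_add.2 (.inl ⟨a, ha, rfl⟩)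

theorem add_mem_opts_add_right {b H : IGame} (G : IGame) (hb : b ∈ H.opts) :
    add G b ∈ (add G H).opts :=
  mem_opts_add.2 (.inr ⟨b, hb, rfl⟩)

theorem opts_add_eq_nil {G H : IGame} :
    (add G H).opts = [] ↔ G.opts = [] ∧ H.opts = [] := by
  simp [opts_add]

theorem opts_zero : zero.opts = [] := rfl

theorem opts_star : star.opts = [zero] := rfl

theorem misereP_iff {G : IGame} :
    MisereP G ↔ G.opts ≠ [] ∧ ∀ x ∈ G.opts, ¬ MisereP x := by
  cases G with | mk l => rw [MisereP]; rfl

theorem not_misereP_of_mem {x G : IGame} (hx : x ∈ G.opts) (h : MisereP x) : ¬ MisereP G :=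
  fun hG => (misereP_iff.1 hG).2 x hx h

theorem not_misereP_of_opts_eq_nil {G : IGame} (h : G.opts = []) : ¬ MisereP G :=
  fun hG => (misereP_iff.1 hG).1 h

theorem opts_eq_nil_iff_of_forall_exists {R : IGame → IGame → Prop} {G H : IGame}
    (h₁ : ∀ a ∈ G.opts, ∃ b ∈ H.opts, R a b)
    (h₂ : ∀ b ∈ H.opts, ∃ a ∈ G.opts, R a b) :
    G.opts = [] ↔ H.opts = [] := by
  simp only [List.eq_nil_iff_forall_not_mem]
  exact ⟨fun hG b hb => (h₂ b hb).elim fun a ha => hG a ha.1,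
    fun hH a ha => (h₁ a ha).elim fun b hb => hH b hb.1⟩

theorem misereP_congr_of_opts {G H : IGame}
    (h₁ : ∀ a ∈ G.opts, ∃ b ∈ H.opts, (MisereP a ↔ MisereP b))
    (h₂ : ∀ b ∈ H.opts, ∃ a ∈ G.opts, (MisereP a ↔ MisereP b)) :
    MisereP G ↔ MisereP H := by
  rw [misereP_iff, misereP_iff]
  refine and_congr (not_congr (opts_eq_nil_iff_of_forall_exists h₁ h₂))
    ⟨fun hG b hb hPb => ?_, fun hH a ha hPa => ?_⟩
  · obtain ⟨a, ha, hab⟩ := h₂ b hb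
    exact hG a ha (hab.2 hPb)
  · obtain ⟨b, hb, hab⟩ := h₁ a ha
    exact hH b hb (hab.1 hPa)

theorem misereP_add_zero (G : IGame) : MisereP (add G zero) ↔ MisereP G := by
  refine misereP_congr_of_opts (fun w hw => ?_) fun a ha => ?_
  · rcases mem_opts_add.1 hw with ⟨a, ha, rfl⟩ | ⟨b, hb, -⟩
    · exact ⟨a, ha, misereP_add_zero a⟩
    · exact absurd hb List.not_mem_nil
  · exact ⟨add a zero, add_mem_opts_add_left zero ha, misereP_add_zero a⟩
termination_by sizeOf G
decreasing_by all_goals exact sizeOf_lt_of_mem_opts ha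

theorem mequiv_of_opts {G H : IGame}
    (h₁ : ∀ a ∈ G.opts, ∃ b ∈ H.opts, MEquiv a b)
    (h₂ : ∀ b ∈ H.opts, ∃ a ∈ G.opts, MEquiv a b) :
    MEquiv G H := by
  intro X
  refine misereP_congr_of_opts (fun w hw => ?_) fun w hw => ?_
  · rcases mem_opts_add.1 hw with ⟨a, ha, rfl⟩ | ⟨x, hx, rfl⟩
    · obtain ⟨b, hb, hab⟩ := h₁ a ha
      exact ⟨add b X, add_mem_opts_add_left X hb, hab X⟩
    · exact ⟨add H x, add_mem_opts_add_right H hx, mequiv_of_opts h₁ h₂ x⟩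
  · rcases mem_opts_add.1 hw with ⟨b, hb, rfl⟩ | ⟨x, hx, rfl⟩
    · obtain ⟨a, ha, hab⟩ := h₂ b hb
      exact ⟨add a X, add_mem_opts_add_left X ha, hab X⟩
    · exact ⟨add G x, add_mem_opts_add_right G hx, mequiv_of_opts h₁ h₂ x⟩
termination_by X => sizeOf X
decreasing_by all_goals exact sizeOf_lt_of_mem_opts hx

theorem MEquiv.misereP_iff {G H : IGame} (h : MEquiv G H) : MisereP G ↔ MisereP H := by
  rw [← misereP_add_zero G, ← misereP_add_zero H]
  exact h zero

theorem add_zero_mequiv (G : IGame) : MEquiv (add G zero) G := by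
  refine mequiv_of_opts (fun w hw => ?_) fun a ha => ?_
  · rcases mem_opts_add.1 hw with ⟨a, ha, rfl⟩ | ⟨b, hb, -⟩
    · exact ⟨a, ha, add_zero_mequiv a⟩
    · exact absurd hb List.not_mem_nil
  · exact ⟨add a zero, add_mem_opts_add_left zero ha, add_zero_mequiv a⟩
termination_by sizeOf G
decreasing_by all_goals exact sizeOf_lt_of_mem_opts ha

theorem add_comm_mequiv (G H : IGame) : MEquiv (add G H) (add H G) := by
  refine mequiv_of_opts (fun w hw => ?_) fun w hw => ?_
  · rcases mem_opts_add.1 hw with ⟨a, ha, rfl⟩ | ⟨b, hb, rfl⟩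
    · exact ⟨add H a, add_mem_opts_add_right H ha, add_comm_mequiv a H⟩
    · exact ⟨add b G, add_mem_opts_add_left G hb, add_comm_mequiv G b⟩
  · rcases mem_opts_add.1 hw with ⟨b, hb, rfl⟩ | ⟨a, ha, rfl⟩
    · exact ⟨add G b, add_mem_opts_add_right G hb, add_comm_mequiv G b⟩
    · exact ⟨add a H, add_mem_opts_add_left H ha, add_comm_mequiv a H⟩
termination_by sizeOf G + sizeOf H
decreasing_by
  all_goals first
    | have := sizeOf_lt_of_mem_opts ha; omega
    | have := sizeOf_lt_of_mem_opts hb; omega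

theorem add_assoc_mequiv (A B C : IGame) : MEquiv (add (add A B) C) (add A (add B C)) := by
  refine mequiv_of_opts (fun w hw => ?_) fun w hw => ?_
  · rcases mem_opts_add.1 hw with ⟨u, hu, rfl⟩ | ⟨c, hc, rfl⟩
    · rcases mem_opts_add.1 hu with ⟨a, ha, rfl⟩ | ⟨b, hb, rfl⟩
      · exact ⟨_, add_mem_opts_add_left _ ha, add_assoc_mequiv a B C⟩
      · exact ⟨_, add_mem_opts_add_right _ (add_mem_opts_add_left _ hb),
          add_assoc_mequiv A b C⟩
    · exact ⟨_, add_mem_opts_add_right _ (add_mem_opts_add_right _ hc), add_assoc_mequiv A B c⟩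
  · rcases mem_opts_add.1 hw with ⟨a, ha, rfl⟩ | ⟨u, hu, rfl⟩
    · exact ⟨_, add_mem_opts_add_left _ (add_mem_opts_add_left _ ha), add_assoc_mequiv a B C⟩
    · rcases mem_opts_add.1 hu with ⟨b, hb, rfl⟩ | ⟨c, hc, rfl⟩
      · exact ⟨_, add_mem_opts_add_left _ (add_mem_opts_add_right _ hb),
          add_assoc_mequiv A b C⟩
      · exact ⟨_, add_mem_opts_add_right _ hc, add_assoc_mequiv A B c⟩
termination_by sizeOf A + sizeOf B + sizeOf C
decreasing_by
  all_goals first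
    | have := sizeOf_lt_of_mem_opts ha; omega
    | have := sizeOf_lt_of_mem_opts hb; omega
    | have := sizeOf_lt_of_mem_opts hc; omega

theorem MEquiv.add_right {G H : IGame} (h : MEquiv G H) (X : IGame) :
    MEquiv (add G X) (add H X) := fun T => by
  rw [(add_assoc_mequiv G X T).misereP_iff, (add_assoc_mequiv H X T).misereP_iff]
  exact h (add X T)

theorem MEquiv.add_left {G H : IGame} (h : MEquiv G H) (X : IGame) :
    MEquiv (add X G) (add X H) :=
  mequiv_trans (add_comm_mequiv X G) (mequiv_trans (h.add_right X) (add_comm_mequiv H X))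

theorem add_right_comm_mequiv (A B C : IGame) : MEquiv (add (add A B) C) (add (add A C) B) :=
  mequiv_trans (add_assoc_mequiv A B C)
    (mequiv_trans ((add_comm_mequiv B C).add_left A) (mequiv_symm (add_assoc_mequiv A C B)))

theorem mem_opts_star {x : IGame} : x ∈ star.opts ↔ x = zero := List.mem_singleton

theorem misereP_add_star_of_opts_eq_nil {G : IGame} (h : G.opts = []) :
    MisereP (add G star) := by
  refine misereP_iff.2 ⟨List.ne_nil_of_mem (add_mem_opts_add_right G (mem_opts_star.2 rfl)),
    fun w hw => ?_⟩
  rcases mem_opts_add.1 hw with ⟨a, ha, -⟩ | ⟨b, hb, rfl⟩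
  · exact absurd ha (h ▸ List.not_mem_nil)
  · rw [mem_opts_star.1 hb]
    exact not_misereP_of_opts_eq_nil (opts_add_eq_nil.2 ⟨h, opts_zero⟩)

theorem misereP_add_star_add_star (G : IGame) :
    MisereP (add (add G star) star) ↔ MisereP G := by
  have hzero : zero ∈ star.opts := mem_opts_star.2 rfl
  constructor
  · intro h
    obtain ⟨-, hopts⟩ := misereP_iff.1 h
    have hGs : ¬ MisereP (add G star) := fun hGs =>
      hopts _ (add_mem_opts_add_right _ hzero) ((misereP_add_zero _).2 hGs)
    refine misereP_iff.2 ⟨fun hG => hGs (misereP_add_star_of_opts_eq_nil hG),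
      fun x hx hPx => ?_⟩
    exact hopts _ (add_mem_opts_add_left _ (add_mem_opts_add_left _ hx))
      ((misereP_add_star_add_star x).2 hPx)
  · intro hG
    have hGs : ¬ MisereP (add G star) :=
      not_misereP_of_mem (add_mem_opts_add_right G hzero) ((misereP_add_zero G).2 hG)
    refine misereP_iff.2 ⟨List.ne_nil_of_mem (add_mem_opts_add_right _ hzero), fun w hw => ?_⟩
    rcases mem_opts_add.1 hw with ⟨u, hu, rfl⟩ | ⟨b, hb, rfl⟩
    · rcases mem_opts_add.1 hu with ⟨x, hx, rfl⟩ | ⟨b, hb, rfl⟩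
      · rw [misereP_add_star_add_star x]
        exact (misereP_iff.1 hG).2 x hx
      · rw [mem_opts_star.1 hb, ((add_zero_mequiv G).add_right star).misereP_iff]
        exact hGs
    · rw [mem_opts_star.1 hb, misereP_add_zero]
      exact hGs
termination_by sizeOf G
decreasing_by all_goals exact sizeOf_lt_of_mem_opts hx

theorem add_star_add_star_mequiv (G : IGame) : MEquiv (add (add G star) star) G := fun X => by
  rw [(mequiv_trans (add_right_comm_mequiv _ _ X)
    ((add_right_comm_mequiv G star X).add_right star)).misereP_iff]
  exact misereP_add_star_add_star (add G X)

theorem misereP_add_of_forall {G T : IGame} (hT : T.opts ≠ [])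
    (h₁ : ∀ x ∈ G.opts, ∃ t ∈ T.opts, MisereP (add x t))
    (h₂ : ∀ t ∈ T.opts, ¬ MisereP (add G t)) : MisereP (add G T) := by
  refine misereP_iff.2 ⟨fun h => hT (opts_add_eq_nil.1 h).2, fun w hw => ?_⟩
  rcases mem_opts_add.1 hw with ⟨x, hx, rfl⟩ | ⟨t, ht, rfl⟩
  · obtain ⟨t, ht, hxt⟩ := h₁ x hx
    exact not_misereP_of_mem (add_mem_opts_add_right x ht) hxt
  · exact h₂ t ht

theorem mem_opts_mate {w G : IGame} :
    w ∈ (mate G).opts ↔ (G.opts = [] ∧ w = zero) ∨ ∃ x ∈ G.opts, mate x = w := by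
  cases G with | mk l =>
  cases l with
  | nil => simp [mate, opts_mk, opts_star]
  | cons x l => simp [mate, opts_mk, eq_comm]

theorem opts_mate_ne_nil (G : IGame) : (mate G).opts ≠ [] := by
  cases G with | mk l =>
  cases l <;> simp [mate, opts_mk, opts_star]

theorem mate_mem_opts_mate {x G : IGame} (hx : x ∈ G.opts) : mate x ∈ (mate G).opts :=
  mem_opts_mate.2 (.inr ⟨x, hx, rfl⟩)

theorem misereP_add_mate (G : IGame) : MisereP (add G (mate G)) := by
  refine misereP_add_of_forall (opts_mate_ne_nil G)
    (fun x hx => ⟨mate x, mate_mem_opts_mate hx, misereP_add_mate x⟩) fun t ht => ?_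
  rcases mem_opts_mate.1 ht with ⟨hG, rfl⟩ | ⟨x, hx, rfl⟩
  · exact not_misereP_of_opts_eq_nil (opts_add_eq_nil.2 ⟨hG, opts_zero⟩)
  · exact not_misereP_of_mem (add_mem_opts_add_left _ hx) (misereP_add_mate x)
termination_by sizeOf G
decreasing_by all_goals exact sizeOf_lt_of_mem_opts hx

theorem exists_misereP_add_not_misereP_add {G H : IGame} (h : ¬ MEquiv G H) :
    ∃ T, MisereP (add G T) ∧ ¬ MisereP (add H T) := by
  simp only [MEquiv, not_forall] at h
  obtain ⟨Z, hZ⟩ := h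
  by_cases hGZ : MisereP (add G Z)
  · exact ⟨Z, hGZ, fun hHZ => hZ (iff_of_true hGZ hHZ)⟩
  have hHZ : MisereP (add H Z) := by_contra fun hHZ => hZ (iff_of_false hGZ hHZ)
  refine ⟨mk (Z :: G.opts.map mate), misereP_add_of_forall (List.cons_ne_nil _ _)
    (fun x hx => ⟨mate x, List.mem_cons_of_mem _ (List.mem_map_of_mem hx), misereP_add_mate x⟩)
    fun t ht => ?_, not_misereP_of_mem (add_mem_opts_add_right H List.mem_cons_self) hHZ⟩
  rcases List.mem_cons.1 ht with rfl | ht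
  · exact hGZ
  · obtain ⟨x, hx, rfl⟩ := List.mem_map.1 ht
    exact not_misereP_of_mem (add_mem_opts_add_left _ hx) (misereP_add_mate x)

theorem linked_of_forall_not_mequiv {G H : IGame}
    (h₁ : ∀ x ∈ G.opts, ¬ MEquiv x H) (h₂ : ∀ y ∈ H.opts, ¬ MEquiv y G) :
    Linked G H := by
  by_cases hnil : G.opts = [] ∧ H.opts = []
  · exact ⟨star, misereP_add_star_of_opts_eq_nil hnil.1,
      misereP_add_star_of_opts_eq_nil hnil.2⟩
  choose f hf using fun x hx => exists_misereP_add_not_misereP_add (h₁ x hx)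
  choose g hg using fun y hy => exists_misereP_add_not_misereP_add (h₂ y hy)
  set T := mk (G.opts.attach.map (fun x => f x.1 x.2) ++ H.opts.attach.map (fun y => g y.1 y.2))
  have hf_mem : ∀ x hx, f x hx ∈ T.opts := fun x hx =>
    List.mem_append_left _ (List.mem_map.2 ⟨⟨x, hx⟩, List.mem_attach _ _, rfl⟩)
  have hg_mem : ∀ y hy, g y hy ∈ T.opts := fun y hy =>
    List.mem_append_right _ (List.mem_map.2 ⟨⟨y, hy⟩, List.mem_attach _ _, rfl⟩)
  have hT : T.opts ≠ [] := by simpa [T, opts_mk] using hnil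
  refine ⟨T,
    misereP_add_of_forall hT (fun x hx => ⟨_, hf_mem x hx, (hf x hx).1⟩) fun t ht => ?_,
    misereP_add_of_forall hT (fun y hy => ⟨_, hg_mem y hy, (hg y hy).1⟩) fun t ht => ?_⟩
  all_goals
    rcases List.mem_append.1 ht with ht | ht <;>
      obtain ⟨⟨z, hz⟩, -, rfl⟩ := List.mem_map.1 ht
  · exact not_misereP_of_mem (add_mem_opts_add_left _ hz) (hf z hz).1
  · exact (hg z hz).2
  · exact (hf z hz).2
  · exact not_misereP_of_mem (add_mem_opts_add_left _ hz) (hg z hz).1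

theorem not_linked_add_star (G : IGame) : ¬ Linked G (add G star) := fun ⟨T, hG, hGs⟩ =>
  not_misereP_of_mem (add_mem_opts_add_left T (add_mem_opts_add_right G (mem_opts_star.2 rfl)))
    ((add_zero_mequiv G T).2 hG) hGs

theorem exists_opt_mequiv_of_mequiv_add_star {G H : IGame} (h : MEquiv H (add G star)) :
    (∃ y ∈ H.opts, MEquiv y G) ∨ ∃ x ∈ G.opts, MEquiv x H := by
  by_contra hne
  push Not at hne
  obtain ⟨T, hG, hH⟩ := linked_of_forall_not_mequiv hne.2 hne.1
  exact not_linked_add_star G ⟨T, hG, (h T).1 hH⟩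

theorem canonical_iff {G : IGame} :
    Canonical G ↔ ¬ HasReversibleOption G ∧ ∀ x ∈ G.opts, Canonical x := by
  refine ⟨fun h => ⟨h G .refl, fun x hx K hK => h K (hK.tail hx)⟩,
    fun ⟨hG, hopts⟩ K hK => ?_⟩
  rcases hK.cases_tail with rfl | ⟨x, hK, hx⟩
  · exact hG
  · exact hopts x hx K hK

theorem exists_canonical_mequiv (G : IGame) : ∃ K, Canonical K ∧ MEquiv K G := by
  choose f hf using fun x (hx : x ∈ G.opts) => exists_canonical_mequiv x
  set M := mk (G.opts.attach.map fun x => f x.1 x.2)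
  have hM : ∀ m ∈ M.opts, ∃ x hx, f x hx = m := by simp [M, opts_mk]
  have hMG : MEquiv M G := mequiv_of_opts
    (fun m hm => (hM m hm).elim fun x ⟨hx, hxm⟩ => ⟨x, hx, hxm ▸ (hf x hx).2⟩)
    fun x hx => ⟨f x hx, List.mem_map.2 ⟨⟨x, hx⟩, List.mem_attach _ _, rfl⟩,
      (hf x hx).2⟩
  have hM_canonical : ∀ m ∈ M.opts, Canonical m := fun m hm =>
    (hM m hm).elim fun x ⟨hx, hxm⟩ => hxm ▸ (hf x hx).1
  by_cases hrev : HasReversibleOption M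
  · obtain ⟨m, hm, x, hx, hxM⟩ := hrev
    exact ⟨x, (canonical_iff.1 (hM_canonical m hm)).2 x hx, mequiv_trans hxM hMG⟩
  · exact ⟨M, canonical_iff.2 ⟨hrev, hM_canonical⟩, hMG⟩
termination_by sizeOf G
decreasing_by all_goals exact sizeOf_lt_of_mem_opts ‹_›

/-- Every game is either even or odd, but not both. -/
theorem even_or_odd (G : IGame) :
    (EvenG G ∨ OddG G) ∧ ¬ (EvenG G ∧ OddG G) := by
  constructor
  · obtain ⟨A, hA, hAG⟩ := exists_canonical_mequiv G
    obtain ⟨B, hB, hBG⟩ := exists_canonical_mequiv (add G star)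
    have hBA : MEquiv B (add A star) := mequiv_trans hBG (mequiv_symm (hAG.add_right star))
    rcases exists_opt_mequiv_of_mequiv_add_star hBA with ⟨b, hb, hbA⟩ | ⟨a, ha, haB⟩
    · exact .inl ⟨b, B, (canonical_iff.1 hB).2 b hb, mequiv_trans hbA hAG, hB, hBG, hb⟩
    · exact .inr ⟨a, A, (canonical_iff.1 hA).2 a ha, mequiv_trans haB hBG, hA,
        mequiv_trans hAG (mequiv_symm (add_star_add_star_mequiv G)), ha⟩
  · rintro ⟨⟨K, L, -, hKG, hL, hLG, hKL⟩, ⟨K', L', -, hK'G, hL', hL'G, hK'L'⟩⟩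
    have hL'K : MEquiv L' K :=
      mequiv_trans hL'G (mequiv_trans (add_star_add_star_mequiv G) (mequiv_symm hKG))
    have hK'K : MEquiv K' (add K star) := mequiv_trans hK'G (mequiv_symm (hKG.add_right star))
    rcases exists_opt_mequiv_of_mequiv_add_star hK'K with ⟨y, hy, hyK⟩ | ⟨x, hx, hxK'⟩
    · exact (canonical_iff.1 hL').1 ⟨K', hK'L', y, hy, mequiv_trans hyK (mequiv_symm hL'K)⟩
    · exact (canonical_iff.1 hL).1
        ⟨K, hKL, x, hx, mequiv_trans hxK' (mequiv_trans hK'G (mequiv_symm hLG))⟩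

end IGame
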